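/- The composition ι₃ ∘ ι₄ of the two involutions ι₄(u,v) = (vb(au+v+1)(au+v)/(aE), u(au+v)/E) with E = abuv+bv²+bv+u and ι₃(u,v) = (bv(u+v+1)(u+v)/D, au(u+v)/D) with D = buv+bv²+au+bv preserves the invariant K = F/G, where F(u,v) = v²(1+u+v) + au(u/b + uv + v²) and G(u,v) = uv. -/

import Mathlib

noncomputable def Fcub {K : Type*} [Field K] (a b u v : K) : K :=
  v^2 * (1 + u + v) + a*u*(u/b + u*v + v^2)

def Gcub {K : Type*} [Field K] (u v : K) : K := u * v

def Dden {K : Type*} [Field K] (a b u v : K) : K := b*u*v + b*v^2 + a*u + b*v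

def Eden {K : Type*} [Field K] (a b u v : K) : K := a*b*u*v + b*v^2 + b*v + u

noncomputable def iota3 {K : Type*} [Field K] (a b : K) (p : K × K) : K × K :=
  (b * p.2 * (p.1 + p.2 + 1) * (p.1 + p.2) / Dden a b p.1 p.2,
   a * p.1 * (p.1 + p.2) / Dden a b p.1 p.2)

noncomputable def iota4 {K : Type*} [Field K] (a b : K) (p : K × K) : K × K :=
  (b * p.2 * (a*p.1 + p.2 + 1) * (a*p.1 + p.2) / (a * Eden a b p.1 p.2),
   p.1 * (a*p.1 + p.2) / Eden a b p.1 p.2)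


/-!
Each of ι₃, ι₄ multiplies `F` and `G` by one and the same rational factor, hence so does their
composition, and the cross-multiplied identity follows. Where a denominator of ι vanishes, Lean's
`x / 0 = 0` sends the point to `(0, 0)`, where `F` and `G` vanish, so the factor laws hold there too.
-/

section Scaling

variable {K : Type*} [Field K] (a b : K) (p : K × K)

theorem Fcub_iota3 (hb : b ≠ 0) :
    Fcub a b (iota3 a b p).1 (iota3 a b p).2 =
      a * b * (p.1 + p.2 + 1) * (p.1 + p.2) ^ 2 / Dden a b p.1 p.2 ^ 2 * Fcub a b p.1 p.2 := by
  obtain ⟨u, v⟩ := p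
  by_cases hD : Dden a b u v = 0
  · simp [iota3, hD, Fcub]
  simp only [iota3, Fcub]
  field_simp
  unfold Dden
  ring

theorem Gcub_iota3 :
    Gcub (iota3 a b p).1 (iota3 a b p).2 =
      a * b * (p.1 + p.2 + 1) * (p.1 + p.2) ^ 2 / Dden a b p.1 p.2 ^ 2 * Gcub p.1 p.2 := by
  simp only [iota3, Gcub]
  ring

theorem Fcub_iota4 (ha : a ≠ 0) (hb : b ≠ 0) :
    Fcub a b (iota4 a b p).1 (iota4 a b p).2 =
      b * (a * p.1 + p.2 + 1) * (a * p.1 + p.2) ^ 2 / (a * Eden a b p.1 p.2 ^ 2) *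
        Fcub a b p.1 p.2 := by
  obtain ⟨u, v⟩ := p
  by_cases hE : Eden a b u v = 0
  · simp [iota4, hE, Fcub]
  simp only [iota4, Fcub]
  field_simp
  unfold Eden
  ring

theorem Gcub_iota4 :
    Gcub (iota4 a b p).1 (iota4 a b p).2 =
      b * (a * p.1 + p.2 + 1) * (a * p.1 + p.2) ^ 2 / (a * Eden a b p.1 p.2 ^ 2) *
        Gcub p.1 p.2 := by
  simp only [iota4, Gcub]
  ring

end Scaling

theorem comp_preserves_invariant_general {K : Type*} [Field K] (a b u v : K)
    (ha : a ≠ 0) (hb : b ≠ 0) :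
    Fcub a b (iota3 a b (iota4 a b (u, v))).1 (iota3 a b (iota4 a b (u, v))).2 * Gcub u v =
      Fcub a b u v *
        Gcub (iota3 a b (iota4 a b (u, v))).1 (iota3 a b (iota4 a b (u, v))).2 := by
  rw [Fcub_iota3 a b _ hb, Gcub_iota3, Fcub_iota4 a b _ ha hb, Gcub_iota4]
  ring

/-- The composition ι₃ ∘ ι₄ preserves the invariant F/G. -/
theorem comp_preserves_invariant {K : Type*} [Field K] (a b u v : K)
    (ha : a ≠ 0) (hb : b ≠ 0)
    (hE : Eden a b u v ≠ 0)
    (hD : Dden a b (iota4 a b (u, v)).1 (iota4 a b (u, v)).2 ≠ 0)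
    (hG : u * v ≠ 0)
    (hG' : (iota3 a b (iota4 a b (u, v))).1 * (iota3 a b (iota4 a b (u, v))).2 ≠ 0) :
    Fcub a b (iota3 a b (iota4 a b (u, v))).1 (iota3 a b (iota4 a b (u, v))).2 * Gcub u v =
      Fcub a b u v *
        Gcub (iota3 a b (iota4 a b (u, v))).1 (iota3 a b (iota4 a b (u, v))).2 :=
  comp_preserves_invariant_general a b u v ha hb
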